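/- If f and g are γ^{1/2}-convex and at least one of them is strictly γ^{1/2}-convex, then f∘g is strictly γ^{1/2}-convex. -/

import Mathlib

open Set Filter Topology

/-!
Write `p = 1 / √|f'|` and `q = 1 / √|g'|`, so that `1 / √|(f ∘ g)'| = (p ∘ g) q` and
`q⁴ g'² = 1`. Differentiating the latter gives `g'' q + 2 g' q' = 0`, which cancels the mixed
terms in `((p ∘ g) q)'' = p''(g) g'² q + p(g) q''`; both remaining summands are nonnegative.
If `p` (resp. `q`) is strictly convex, the mean value theorem applied to `p' ∘ g` (resp. `q'`)
gives in every interval a point where the first (resp. second) summand is positive, so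
`((p ∘ g) q)'` is strictly increasing.
-/

lemma exists_deriv_ne_zero_of_ne {F : ℝ → ℝ} {a b : ℝ} (hab : a < b)
    (hFc : ContinuousOn F (Icc a b)) (hFd : DifferentiableOn ℝ F (Ioo a b)) (hne : F a ≠ F b) :
    ∃ c ∈ Ioo a b, deriv F c ≠ 0 := by
  obtain ⟨c, hc, hslope⟩ := exists_deriv_eq_slope F hab hFc hFd
  exact ⟨c, hc, hslope ▸ div_ne_zero (sub_ne_zero.2 hne.symm) (sub_ne_zero.2 hab.ne')⟩

lemma strictMonoOn_of_deriv_nonneg_of_exists_deriv_ne_zero {I : Set ℝ} {F : ℝ → ℝ}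
    (hI : Convex ℝ I) (hIo : IsOpen I) (hF : DifferentiableOn ℝ F I)
    (hF' : ∀ x ∈ I, 0 ≤ deriv F x)
    (hne : ∀ a ∈ I, ∀ b ∈ I, a < b → ∃ c ∈ Ioo a b, deriv F c ≠ 0) :
    StrictMonoOn F I := by
  have hmono : MonotoneOn F I :=
    monotoneOn_of_deriv_nonneg hI hF.continuousOn (by rwa [hIo.interior_eq])
      (by rwa [hIo.interior_eq])
  intro a ha b hb hab
  refine (hmono ha hb hab.le).lt_of_ne fun heq => ?_
  obtain ⟨c, hc, hc0⟩ := hne a ha b hb hab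
  have hIoo : Ioo a b ⊆ I := Ioo_subset_Icc_self.trans (hI.ordConnected.out ha hb)
  have hconst : EqOn F (fun _ => F a) (Ioo a b) := fun z hz =>
    le_antisymm (heq ▸ hmono (hIoo hz) hb hz.2.le) (hmono ha (hIoo hz) hz.1.le)
  exact hc0 ((hconst.eventuallyEq_of_mem (isOpen_Ioo.mem_nhds hc)).deriv_eq.trans (deriv_const _ _))

lemma pos_of_eventually_nonneg_of_deriv_ne_zero {g : ℝ → ℝ} {x : ℝ}
    (hg : ∀ᶠ y in 𝓝 x, 0 ≤ g y) (hg' : deriv g x ≠ 0) : 0 < g x := by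
  refine hg.self_of_nhds.lt_of_ne fun hx => hg' (IsLocalMin.deriv_eq_zero ?_)
  filter_upwards [hg] with y hy
  rwa [← hx]

lemma ContDiffOn.hasDerivAt_deriv {φ : ℝ → ℝ} {s : Set ℝ} {x : ℝ} (hφ : ContDiffOn ℝ 2 φ s)
    (hs : IsOpen s) (hx : x ∈ s) : HasDerivAt (deriv φ) (deriv (deriv φ) x) x :=
  (((hφ.deriv_of_isOpen hs (by norm_num)).differentiableOn one_ne_zero).differentiableAt
    (hs.mem_nhds hx)).hasDerivAt

lemma ConvexOn.deriv_deriv_nonneg {φ : ℝ → ℝ} {s : Set ℝ} {x : ℝ} (hφc : ConvexOn ℝ s φ)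
    (hφ : DifferentiableOn ℝ φ s) (hs : IsOpen s) (hx : x ∈ s) : 0 ≤ deriv (deriv φ) x := by
  rw [← derivWithin_of_isOpen hs hx]
  exact (hφc.monotoneOn_deriv fun y hy => hφ.differentiableAt (hs.mem_nhds hy)).derivWithin_nonneg

lemma HasDerivAt.mul_add_two_mul_eq_zero_of_pow_four_mul_sq {Q D : ℝ → ℝ} {Q' D' x : ℝ}
    (hQ : HasDerivAt Q Q' x) (hD : HasDerivAt D D' x)
    (h : ∀ᶠ y in 𝓝 x, Q y ^ 4 * D y ^ 2 = 1) : D' * Q x + 2 * D x * Q' = 0 := by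
  have hx : Q x ^ 4 * D x ^ 2 = 1 := h.self_of_nhds
  have hQ0 : Q x ≠ 0 := by rintro h0; simp [h0] at hx
  have hD0 : D x ≠ 0 := by rintro h0; simp [h0] at hx
  have h0 := ((hQ.pow 4).mul (hD.pow 2)).unique
    ((hasDerivAt_const x (1 : ℝ)).congr_of_eventuallyEq h)
  have : (2 * Q x ^ 3 * D x) * (D' * Q x + 2 * D x * Q') = 0 := by
    simp only [Pi.pow_apply] at h0
    linear_combination h0
  simpa [hQ0, hD0] using this

lemma StrictConvexOn.exists_deriv_deriv_comp_ne_zero {P G : ℝ → ℝ} {J : Set ℝ} {a b : ℝ}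
    (hPs : StrictConvexOn ℝ J P) (hP : ContDiffOn ℝ 2 P J) (hJ : IsOpen J) (hab : a < b)
    (hG : ∀ x ∈ Icc a b, DifferentiableAt ℝ G x) (hG' : ∀ x ∈ Ioo a b, deriv G x ≠ 0)
    (hGJ : MapsTo G (Icc a b) J) :
    ∃ c ∈ Ioo a b, deriv (deriv P) (G c) ≠ 0 := by
  have hP' : ContinuousOn (deriv P) J := (hP.deriv_of_isOpen (m := 1) hJ (by norm_num)).continuousOn
  have hGc : ContinuousOn G (Icc a b) := fun x hx => (hG x hx).continuousAt.continuousWithinAt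
  have hGab : G a ≠ G b := fun heq => by
    obtain ⟨c, hc, hc0⟩ := exists_deriv_eq_zero hab hGc heq
    exact hG' c hc hc0
  have hne : deriv P (G a) ≠ deriv P (G b) :=
    ((hPs.strictMonoOn_deriv fun y hy => (hP.differentiableOn (by norm_num)).differentiableAt
      (hJ.mem_nhds hy)).injOn.ne (hGJ (left_mem_Icc.2 hab.le)) (hGJ (right_mem_Icc.2 hab.le))) hGab
  have hchain : ∀ c ∈ Ioo a b,
      HasDerivAt (fun x => deriv P (G x)) (deriv (deriv P) (G c) * deriv G c) c := fun c hc =>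
    (hP.hasDerivAt_deriv hJ (hGJ (Ioo_subset_Icc_self hc))).comp c
      (hG c (Ioo_subset_Icc_self hc)).hasDerivAt
  obtain ⟨c, hc, hc0⟩ := exists_deriv_ne_zero_of_ne hab (hP'.comp hGc hGJ)
    (fun x hx => (hchain x hx).differentiableAt.differentiableWithinAt) hne
  exact ⟨c, hc, left_ne_zero_of_mul ((hchain c hc).deriv ▸ hc0)⟩

section CompMul

variable {I J : Set ℝ} {P Q G : ℝ → ℝ}

lemma hasDerivAt_deriv_comp_mul (hI : IsOpen I) (hJ : IsOpen J) (hP : ContDiffOn ℝ 2 P J)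
    (hQ : ContDiffOn ℝ 2 Q I) (hG : ContDiffOn ℝ 2 G I) (hGIJ : MapsTo G I J)
    (hQG : ∀ x ∈ I, Q x ^ 4 * deriv G x ^ 2 = 1) {x : ℝ} (hx : x ∈ I) :
    HasDerivAt (deriv fun y => P (G y) * Q y)
      (deriv (deriv P) (G x) * deriv G x ^ 2 * Q x + P (G x) * deriv (deriv Q) x) x := by
  have hd {φ : ℝ → ℝ} {s : Set ℝ} (hφ : ContDiffOn ℝ 2 φ s) (hs : IsOpen s) {y : ℝ} (hy : y ∈ s) :
      HasDerivAt φ (deriv φ y) y :=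
    ((hφ.differentiableOn (by norm_num)).differentiableAt (hs.mem_nhds hy)).hasDerivAt
  have hfirst : EqOn (deriv fun y => P (G y) * Q y)
      (fun y => deriv P (G y) * deriv G y * Q y + P (G y) * deriv Q y) I := fun y hy =>
    (((hd hP hJ (hGIJ hy)).comp y (hd hG hI hy)).mul (hd hQ hI hy)).deriv
  have hcancel : deriv (deriv G) x * Q x + 2 * deriv G x * deriv Q x = 0 :=
    (hd hQ hI hx).mul_add_two_mul_eq_zero_of_pow_four_mul_sq (hG.hasDerivAt_deriv hI hx)
      (eventually_of_mem (hI.mem_nhds hx) hQG)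
  have hsecond := ((((hP.hasDerivAt_deriv hJ (hGIJ hx)).comp x (hd hG hI hx)).mul
    (hG.hasDerivAt_deriv hI hx)).mul (hd hQ hI hx)).add
    (((hd hP hJ (hGIJ hx)).comp x (hd hG hI hx)).mul (hQ.hasDerivAt_deriv hI hx))
  refine (hsecond.congr_of_eventuallyEq
    (hfirst.eventuallyEq_of_mem (hI.mem_nhds hx))).congr_deriv ?_
  simp only [Function.comp_apply, Pi.mul_apply]
  linear_combination deriv P (G x) * hcancel

lemma exists_deriv_deriv_comp_ne_zero_or_deriv_deriv_ne_zero (hI : IsOpen I) (hJ : IsOpen J)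
    (hP : ContDiffOn ℝ 2 P J) (hQ : ContDiffOn ℝ 2 Q I) (hG : ∀ x ∈ I, DifferentiableAt ℝ G x)
    (hG' : ∀ x ∈ I, deriv G x ≠ 0) (hGIJ : MapsTo G I J)
    (hstrict : StrictConvexOn ℝ J P ∨ StrictConvexOn ℝ I Q) {a b : ℝ} (hab : a < b)
    (habI : Icc a b ⊆ I) :
    ∃ c ∈ Ioo a b, deriv (deriv P) (G c) ≠ 0 ∨ deriv (deriv Q) c ≠ 0 := by
  rcases hstrict with hPs | hQs
  · obtain ⟨c, hc, hc0⟩ := hPs.exists_deriv_deriv_comp_ne_zero hP hJ hab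
      (fun x hx => hG x (habI hx)) (fun x hx => hG' x (habI (Ioo_subset_Icc_self hx)))
      (hGIJ.mono_left habI)
    exact ⟨c, hc, .inl hc0⟩
  · obtain ⟨c, hc, hc0⟩ := hQs.exists_deriv_deriv_comp_ne_zero hQ hI hab
      (fun x _ => differentiableAt_id) (fun x _ => by simp) ((mapsTo_id _).mono_left habI)
    exact ⟨c, hc, .inr hc0⟩

theorem strictMonoOn_deriv_comp_mul (hI : IsOpen I) (hJ : IsOpen J) (hP : ContDiffOn ℝ 2 P J)
    (hQ : ContDiffOn ℝ 2 Q I) (hG : ContDiffOn ℝ 2 G I) (hGIJ : MapsTo G I J)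
    (hQG : ∀ x ∈ I, Q x ^ 4 * deriv G x ^ 2 = 1) (hP0 : ∀ y ∈ J, 0 < P y)
    (hQ0 : ∀ x ∈ I, 0 < Q x) (hPc : ConvexOn ℝ J P) (hQc : ConvexOn ℝ I Q)
    (hstrict : StrictConvexOn ℝ J P ∨ StrictConvexOn ℝ I Q) :
    StrictMonoOn (deriv fun x => P (G x) * Q x) I := by
  have hsecond := fun x (hx : x ∈ I) => hasDerivAt_deriv_comp_mul hI hJ hP hQ hG hGIJ hQG hx
  have hP'' : ∀ y ∈ J, 0 ≤ deriv (deriv P) y :=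
    fun y hy => hPc.deriv_deriv_nonneg (hP.differentiableOn (by norm_num)) hJ hy
  have hQ'' : ∀ x ∈ I, 0 ≤ deriv (deriv Q) x :=
    fun x hx => hQc.deriv_deriv_nonneg (hQ.differentiableOn (by norm_num)) hI hx
  have hG' : ∀ x ∈ I, deriv G x ≠ 0 := fun x hx h0 => by simpa [h0] using hQG x hx
  have hGd : ∀ x ∈ I, DifferentiableAt ℝ G x :=
    fun x hx => (hG.differentiableOn (by norm_num)).differentiableAt (hI.mem_nhds hx)
  refine strictMonoOn_of_deriv_nonneg_of_exists_deriv_ne_zero hQc.1 hI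
    (fun x hx => (hsecond x hx).differentiableAt.differentiableWithinAt)
    (fun x hx => (hsecond x hx).deriv ▸ add_nonneg
      (mul_nonneg (mul_nonneg (hP'' _ (hGIJ hx)) (sq_nonneg _)) (hQ0 x hx).le)
      (mul_nonneg (hP0 _ (hGIJ hx)).le (hQ'' x hx)))
    fun a ha b hb hab => ?_
  have hab' : Icc a b ⊆ I := hQc.1.ordConnected.out ha hb
  obtain ⟨c, hc, hc0⟩ := exists_deriv_deriv_comp_ne_zero_or_deriv_deriv_ne_zero hI hJ hP hQ hGd hG'
    hGIJ hstrict hab hab'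
  have hcI := hab' (Ioo_subset_Icc_self hc)
  refine ⟨c, hc, (hsecond c hcI).deriv ▸ ?_⟩
  have hP''c := hP'' _ (hGIJ hcI)
  have hQ''c := hQ'' c hcI
  have := hP0 _ (hGIJ hcI)
  have := hQ0 c hcI
  have := hG' c hcI
  rcases hc0 with hc0 | hc0
  · have := hP''c.lt_of_ne' hc0
    positivity
  · have := hQ''c.lt_of_ne' hc0
    positivity

end CompMul

/-- `f` is γ^{1/2}-convex on `s` when this function is convex on `s`. -/
noncomputable def invSqrtAbsDerivWithin (f : ℝ → ℝ) (s : Set ℝ) (x : ℝ) : ℝ :=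
  1 / √|derivWithin f s x|

section InvSqrtAbsDerivWithin

variable {f g : ℝ → ℝ} {s t : Set ℝ} {x : ℝ}

lemma invSqrtAbsDerivWithin_pos (h : derivWithin f s x ≠ 0) : 0 < invSqrtAbsDerivWithin f s x := by
  unfold invSqrtAbsDerivWithin
  positivity

lemma invSqrtAbsDerivWithin_pow_four_mul_sq (h : derivWithin f s x ≠ 0) :
    invSqrtAbsDerivWithin f s x ^ 4 * derivWithin f s x ^ 2 = 1 := by
  have h4 : (√|derivWithin f s x|) ^ 4 = derivWithin f s x ^ 2 := by
    rw [show (4 : ℕ) = 2 * 2 by rfl, pow_mul, Real.sq_sqrt (abs_nonneg _), sq_abs]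
  rw [invSqrtAbsDerivWithin, div_pow, h4, one_pow, one_div_mul_cancel (pow_ne_zero 2 h)]

lemma invSqrtAbsDerivWithin_comp (hf : DifferentiableOn ℝ f t) (hg : DifferentiableOn ℝ g s)
    (hst : MapsTo g s t) (hx : x ∈ s) :
    invSqrtAbsDerivWithin (f ∘ g) s x =
      invSqrtAbsDerivWithin f t (g x) * invSqrtAbsDerivWithin g s x := by
  rw [invSqrtAbsDerivWithin, derivWithin_comp x (hf _ (hst hx)) (hg x hx) hst, abs_mul,
    Real.sqrt_mul (abs_nonneg _), ← one_div_mul_one_div, invSqrtAbsDerivWithin,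
    invSqrtAbsDerivWithin]

lemma ContDiffOn.invSqrtAbsDerivWithin {m : ℕ∞} {n : WithTop ℕ∞} (hf : ContDiffOn ℝ n f s)
    (hs : UniqueDiffOn ℝ s) (hmn : m + 1 ≤ n) (h0 : ∀ x ∈ s, derivWithin f s x ≠ 0) :
    ContDiffOn ℝ m (invSqrtAbsDerivWithin f s) s :=
  contDiffOn_const.div (((hf.derivWithin hs hmn).abs h0).sqrt fun x hx => by simpa using h0 x hx)
    fun x hx => by simpa using h0 x hx

end InvSqrtAbsDerivWithin

theorem gammaHalfConvex_comp_strict_general (f g : ℝ → ℝ)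
    (hf : ContDiffOn ℝ 3 f (Ici 0)) (hg : ContDiffOn ℝ 3 g (Ici 0))
    (hgmap : ∀ x ∈ Ici (0:ℝ), g x ∈ Ici (0:ℝ))
    (hf' : ∀ x ∈ Ici (0:ℝ), derivWithin f (Ici 0) x ≠ 0)
    (hg' : ∀ x ∈ Ici (0:ℝ), derivWithin g (Ici 0) x ≠ 0)
    (hfc : ConvexOn ℝ (Ici 0) (fun x => 1 / Real.sqrt |derivWithin f (Ici 0) x|))
    (hgc : ConvexOn ℝ (Ici 0) (fun x => 1 / Real.sqrt |derivWithin g (Ici 0) x|))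
    (hstrict :
      StrictConvexOn ℝ (Ici 0) (fun x => 1 / Real.sqrt |derivWithin f (Ici 0) x|) ∨
      StrictConvexOn ℝ (Ici 0) (fun x => 1 / Real.sqrt |derivWithin g (Ici 0) x|)) :
    StrictConvexOn ℝ (Ici 0) (fun x => 1 / Real.sqrt |derivWithin (f ∘ g) (Ici 0) x|) := by
  change StrictConvexOn ℝ (Ici 0) (invSqrtAbsDerivWithin (f ∘ g) (Ici 0))
  have hP := hf.invSqrtAbsDerivWithin (m := 2) (uniqueDiffOn_Ici 0) (by norm_num) hf'
  have hQ := hg.invSqrtAbsDerivWithin (m := 2) (uniqueDiffOn_Ici 0) (by norm_num) hg'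
  have hIoi : Ioi (0:ℝ) ⊆ Ici 0 := Ioi_subset_Ici_self
  have hderiv : ∀ x ∈ Ioi (0:ℝ), derivWithin g (Ici 0) x = deriv g x :=
    fun x hx => derivWithin_of_mem_nhds (Ici_mem_nhds hx)
  have hgI : MapsTo g (Ioi 0) (Ioi 0) := fun x hx =>
    pos_of_eventually_nonneg_of_deriv_ne_zero
      (eventually_of_mem (Ici_mem_nhds hx) hgmap) (hderiv x hx ▸ hg' x (hIoi hx))
  refine (StrictMonoOn.strictConvexOn_of_deriv (convex_Ici 0)
    ((hP.continuousOn.comp hg.continuousOn hgmap).mul hQ.continuousOn) ?_).congr fun x hx =>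
      (invSqrtAbsDerivWithin_comp (hf.differentiableOn (by norm_num))
        (hg.differentiableOn (by norm_num)) hgmap hx).symm
  rw [interior_Ici]
  exact strictMonoOn_deriv_comp_mul (P := invSqrtAbsDerivWithin f (Ici 0))
    (Q := invSqrtAbsDerivWithin g (Ici 0)) (G := g) isOpen_Ioi isOpen_Ioi (hP.mono hIoi)
    (hQ.mono hIoi) ((hg.mono hIoi).of_le (by norm_num)) hgI
    (fun x hx => hderiv x hx ▸ invSqrtAbsDerivWithin_pow_four_mul_sq (hg' x (hIoi hx)))
    (fun y hy => invSqrtAbsDerivWithin_pos (hf' y (hIoi hy)))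
    (fun x hx => invSqrtAbsDerivWithin_pos (hg' x (hIoi hx)))
    (hfc.subset hIoi (convex_Ioi 0)) (hgc.subset hIoi (convex_Ioi 0))
    (hstrict.imp (·.subset hIoi (convex_Ioi 0)) (·.subset hIoi (convex_Ioi 0)))

/-- If `f, g` are γ^{1/2}-convex (monotone, C³, nonvanishing derivative, `1/√|·'|` convex)
and at least one of them is strictly γ^{1/2}-convex, then `f ∘ g` is strictly
γ^{1/2}-convex. -/
theorem gammaHalfConvex_comp_strict (f g : ℝ → ℝ)
    (hf : ContDiffOn ℝ 3 f (Ici 0)) (hg : ContDiffOn ℝ 3 g (Ici 0))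
    (hfmap : ∀ x ∈ Ici (0:ℝ), f x ∈ Ici (0:ℝ))
    (hgmap : ∀ x ∈ Ici (0:ℝ), g x ∈ Ici (0:ℝ))
    (hfmono : MonotoneOn f (Ici 0) ∨ AntitoneOn f (Ici 0))
    (hgmono : MonotoneOn g (Ici 0) ∨ AntitoneOn g (Ici 0))
    (hf' : ∀ x ∈ Ici (0:ℝ), derivWithin f (Ici 0) x ≠ 0)
    (hg' : ∀ x ∈ Ici (0:ℝ), derivWithin g (Ici 0) x ≠ 0)
    (hfc : ConvexOn ℝ (Ici 0) (fun x => 1 / Real.sqrt |derivWithin f (Ici 0) x|))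
    (hgc : ConvexOn ℝ (Ici 0) (fun x => 1 / Real.sqrt |derivWithin g (Ici 0) x|))
    (hstrict :
      StrictConvexOn ℝ (Ici 0) (fun x => 1 / Real.sqrt |derivWithin f (Ici 0) x|) ∨
      StrictConvexOn ℝ (Ici 0) (fun x => 1 / Real.sqrt |derivWithin g (Ici 0) x|)) :
    StrictConvexOn ℝ (Ici 0) (fun x => 1 / Real.sqrt |derivWithin (f ∘ g) (Ici 0) x|) :=
  gammaHalfConvex_comp_strict_general f g hf hg hgmap hf' hg' hfc hgc hstrict
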